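/- arXiv:1812.07300 — 4 statements merged into one kernel-verified Lean document; each statement's English description precedes it below -/
import Mathlib

section
/- Let n ≥ 1 and Δ ∈ ℝ^{n×n} be entrywise nonnegative with spectral radius ρ(Δ) < 1. Then every real n×n matrix A satisfying |A_{ij} − I_{ij}| ≤ Δ_{ij} for all i, j is invertible. (Regularity part of Rohn's theorem on the inverse of the interval matrix [I − Δ, I + Δ].) -/
open Matrix
open scoped ENNReal NNReal

attribute [local instance] Matrix.linftyOpNormedRing Matrix.linftyOpNormedAlgebra

noncomputable def specRad {n : ℕ} (M : Matrix (Fin n) (Fin n) ℝ) : ENNReal :=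
  spectralRadius ℂ (M.map (algebraMap ℝ ℂ))

open Filter in
/-- Regularity part of Rohn's theorem: if `Δ ≥ 0` entrywise and `ρ(Δ) < 1`,
then every matrix `A` with `|A - I| ≤ Δ` entrywise is invertible. -/
theorem stmt_0 {n : ℕ} (hn : 1 ≤ n) (Δ : Matrix (Fin n) (Fin n) ℝ)
    (hΔ : ∀ i j, 0 ≤ Δ i j)
    (hρ : specRad Δ < 1)
    (A : Matrix (Fin n) (Fin n) ℝ)
    (hA : ∀ i j, |A i j - (1 : Matrix (Fin n) (Fin n) ℝ) i j| ≤ Δ i j) :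
    IsUnit A := by
  have hne : Nonempty (Fin n) := ⟨⟨0, hn⟩⟩
  set f : ℝ →+* ℂ := algebraMap ℝ ℂ with hf
  set B : Matrix (Fin n) (Fin n) ℝ := 1 - A with hB
  have hBle : ∀ i j, |B i j| ≤ Δ i j := by
    intro i j
    simpa [hB, abs_sub_comm] using hA i j
  -- entrywise bound on powers
  have hpow : ∀ k, ∀ i j, |(B ^ k) i j| ≤ (Δ ^ k) i j := by
    intro k
    induction k with
    | zero =>
      intro i j
      by_cases h : i = j <;> simp [h, Matrix.one_apply]
    | succ k ih =>
      intro i j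
      rw [pow_succ, pow_succ, Matrix.mul_apply, Matrix.mul_apply]
      calc |∑ l, (B ^ k) i l * B l j| ≤ ∑ l, |(B ^ k) i l * B l j| :=
            Finset.abs_sum_le_sum_abs _ _
        _ ≤ ∑ l, (Δ ^ k) i l * Δ l j := by
            refine Finset.sum_le_sum fun l _ => ?_
            rw [abs_mul]
            exact mul_le_mul (ih i l) (hBle l j) (abs_nonneg _)
              (le_trans (abs_nonneg _) (ih i l))
  -- nnnorm comparison over ℂ
  have hnn : ∀ k, ‖(B.map f) ^ k‖₊ ≤ ‖(Δ.map f) ^ k‖₊ := by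
    intro k
    have hmapB : (B.map f) ^ k = (B ^ k).map f := by
      simpa [RingHom.mapMatrix_apply] using (map_pow (f.mapMatrix) B k).symm
    have hmapΔ : (Δ.map f) ^ k = (Δ ^ k).map f := by
      simpa [RingHom.mapMatrix_apply] using (map_pow (f.mapMatrix) Δ k).symm
    rw [hmapB, hmapΔ, Matrix.linfty_opNNNorm_def, Matrix.linfty_opNNNorm_def]
    refine Finset.sup_mono_fun fun i _ => Finset.sum_le_sum fun j _ => ?_
    have : ‖((B ^ k).map f) i j‖₊ = ‖(B ^ k) i j‖₊ := by
      simp [Matrix.map_apply, hf, Complex.nnnorm_real]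
    rw [this]
    have : ‖((Δ ^ k).map f) i j‖₊ = ‖(Δ ^ k) i j‖₊ := by
      simp [Matrix.map_apply, hf, Complex.nnnorm_real]
    rw [this]
    have h1 := hpow k i j
    have h2 : 0 ≤ (Δ ^ k) i j := le_trans (abs_nonneg _) h1
    rw [← NNReal.coe_le_coe]
    simp only [coe_nnnorm, Real.norm_eq_abs]
    rw [abs_of_nonneg h2]
    exact h1
  -- Gelfand: pick k with small norm
  have hg := spectrum.pow_nnnorm_pow_one_div_tendsto_nhds_spectralRadius (Δ.map f)
  have hev : ∀ᶠ k : ℕ in atTop,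
      (‖(Δ.map f) ^ k‖₊ : ℝ≥0∞) ^ (1 / (k : ℝ)) < 1 := hg.eventually_lt_const hρ
  obtain ⟨k, hk1, hk2⟩ := ((eventually_ge_atTop 1).and hev).exists
  -- spectral radius of B over ℂ is < 1
  have hρB : spectralRadius ℂ (B.map f) < 1 := by
    obtain ⟨m, rfl⟩ : ∃ m, k = m + 1 := ⟨k - 1, (Nat.succ_pred_eq_of_pos hk1).symm⟩
    have := spectrum.spectralRadius_le_pow_nnnorm_pow_one_div ℂ (B.map f) m
    rw [nnnorm_one, ENNReal.coe_one, ENNReal.one_rpow, mul_one] at this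
    refine lt_of_le_of_lt (this.trans ?_) hk2
    push_cast
    exact ENNReal.rpow_le_rpow (by exact_mod_cast hnn (m + 1)) (by positivity)
  -- hence 1 ∉ spectrum, so 1 - B.map f is a unit
  have h1 : (1 : ℂ) ∉ spectrum ℂ (B.map f) := by
    intro hmem
    have : (‖(1 : ℂ)‖₊ : ℝ≥0∞) ≤ spectralRadius ℂ (B.map f) :=
      le_iSup₂ (f := fun k (_ : k ∈ spectrum ℂ (B.map f)) => (‖k‖₊ : ℝ≥0∞)) 1 hmem
    simp at this
    exact absurd (lt_of_le_of_lt this hρB) (lt_irrefl _)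
  have hU : IsUnit ((1 : Matrix (Fin n) (Fin n) ℂ) - B.map f) := by
    have := spectrum.notMem_iff.mp h1
    simpa using this
  have hAmap : (1 : Matrix (Fin n) (Fin n) ℂ) - B.map f = A.map f := by
    ext i j
    by_cases h : i = j <;>
      simp [hB, Matrix.map_apply, Matrix.sub_apply, Matrix.one_apply, h]
  rw [hAmap] at hU
  have hdet : IsUnit ((A.map f).det) := (Matrix.isUnit_iff_isUnit_det _).mp hU
  rw [show A.map ⇑f = f.mapMatrix A from rfl, ← RingHom.map_det] at hdet
  have : A.det ≠ 0 := by
    intro h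
    rw [h, map_zero] at hdet
    exact hdet.ne_zero rfl
  exact (Matrix.isUnit_iff_isUnit_det _).mpr (isUnit_iff_ne_zero.mpr this)
end

section
/- Let n ≥ 1 and Δ ∈ ℝ^{n×n} be entrywise nonnegative with spectral radius ρ(Δ) < 1. Then I − Δ is invertible, every real matrix A with |A − I| ≤ Δ entrywise is invertible and satisfies (A^{-1})_{ij} ≤ ((I − Δ)^{-1})_{ij} for all i, j; moreover for every i, j the maximum of (A^{-1})_{ij} over all A with |A − I| ≤ Δ equals ((I − Δ)^{-1})_{ij}, attained at A = I − Δ. (Upper-bound part of Rohn's theorem: the entrywise maximum of inverses over [I − Δ, I + Δ] is H̄ = (I − Δ)^{-1}.) -/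
open Matrix

/-!
If `|E| ≤ Δ` entrywise then `|E ^ k| ≤ Δ ^ k` entrywise, so the Neumann series `∑ E ^ k`
is dominated entrywise by `∑ Δ ^ k`, which converges because `ρ(Δ) < 1` (Gelfand's formula).
Hence `(I - E)⁻¹ = ∑ E ^ k ≤ ∑ Δ ^ k = (I - Δ)⁻¹`, and every `A` in `[I - Δ, I + Δ]` is of
the form `I - E`; the bound is attained at `E = Δ`.
-/

open Filter

theorem summable_norm_pow_of_spectralRadius_lt_one {A : Type*} [NormedRing A]
    [NormedAlgebra ℂ A] [CompleteSpace A] {a : A} (ha : spectralRadius ℂ a < 1) :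
    Summable fun k : ℕ => ‖a ^ k‖ := by
  obtain ⟨r, har, hr1⟩ := ENNReal.lt_iff_exists_nnreal_btwn.mp ha
  have hgelfand := spectrum.pow_nnnorm_pow_one_div_tendsto_nhds_spectralRadius a
  have hbound : ∀ᶠ k : ℕ in atTop, ‖‖a ^ k‖‖ ≤ (r : ℝ) ^ k := by
    filter_upwards [hgelfand.eventually_lt_const har, eventually_ne_atTop 0] with k hk hk0
    have hpow := ENNReal.rpow_le_rpow hk.le (Nat.cast_nonneg k : (0 : ℝ) ≤ k)
    rw [← ENNReal.rpow_mul, one_div, inv_mul_cancel₀ (Nat.cast_ne_zero.2 hk0), ENNReal.rpow_one,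
      ENNReal.rpow_natCast, ← ENNReal.coe_pow, ENNReal.coe_le_coe] at hpow
    simpa using NNReal.coe_le_coe.2 hpow
  have hr1 : (r : ℝ) < 1 := by exact_mod_cast hr1
  exact (summable_geometric_of_lt_one r.coe_nonneg hr1).of_norm_bounded_eventually_nat hbound

section Neumann

attribute [local instance] Matrix.linftyOpNormedAddCommGroup Matrix.linftyOpNormedRing
  Matrix.linftyOpNormedAlgebra

theorem summable_pow_of_specRad_lt_one {n : ℕ} {Δ : Matrix (Fin n) (Fin n) ℝ}
    (hρ : specRad Δ < 1) : Summable fun k : ℕ => Δ ^ k := by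
  have : CompleteSpace (Matrix (Fin n) (Fin n) ℂ) := FiniteDimensional.complete ℂ _
  have hC : Summable fun k : ℕ => (Δ.map (algebraMap ℝ ℂ)) ^ k :=
    (summable_norm_pow_of_spectralRadius_lt_one hρ).of_norm
  simp_rw [← Matrix.map_pow] at hC
  exact Pi.summable.2 fun i => Pi.summable.2 fun j =>
    Complex.summable_ofReal.1 (Pi.summable.1 (Pi.summable.1 hC i) j)

end Neumann

section Domination

variable {ι : Type*} [Fintype ι] [DecidableEq ι]

theorem abs_pow_apply_le {R : Type*} [CommRing R] [LinearOrder R] [IsStrictOrderedRing R]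
    {E Δ : Matrix ι ι R} (hE : ∀ i j, |E i j| ≤ Δ i j) (k : ℕ) (i j : ι) :
    |(E ^ k) i j| ≤ (Δ ^ k) i j := by
  induction k generalizing j with
  | zero => by_cases h : i = j <;> simp [one_apply, h]
  | succ k ih =>
    rw [pow_succ, pow_succ, mul_apply, mul_apply]
    refine (Finset.abs_sum_le_sum_abs _ _).trans (Finset.sum_le_sum fun l _ => ?_)
    rw [abs_mul]
    exact mul_le_mul (ih l) (hE l j) (abs_nonneg _) ((abs_nonneg _).trans (ih l))

variable {E Δ : Matrix ι ι ℝ}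

theorem summable_pow_of_abs_le (hΔ : Summable fun k : ℕ => Δ ^ k)
    (hE : ∀ i j, |E i j| ≤ Δ i j) : Summable fun k : ℕ => E ^ k :=
  Pi.summable.2 fun i => Pi.summable.2 fun j =>
    (Pi.summable.1 (Pi.summable.1 hΔ i) j).of_norm_bounded fun k => abs_pow_apply_le hE k i j

theorem inv_one_sub_eq_tsum_pow (hE : Summable fun k : ℕ => E ^ k) :
    IsUnit (1 - E) ∧ (1 - E)⁻¹ = ∑' k : ℕ, E ^ k :=
  ⟨⟨⟨1 - E, _, hE.one_sub_mul_tsum_pow, hE.tsum_pow_mul_one_sub⟩, rfl⟩,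
    inv_eq_right_inv hE.one_sub_mul_tsum_pow⟩

theorem inv_one_sub_apply_le (hΔ : Summable fun k : ℕ => Δ ^ k)
    (hE : ∀ i j, |E i j| ≤ Δ i j) (i j : ι) : (1 - E)⁻¹ i j ≤ (1 - Δ)⁻¹ i j := by
  have hE' := summable_pow_of_abs_le hΔ hE
  rw [(inv_one_sub_eq_tsum_pow hE').2, (inv_one_sub_eq_tsum_pow hΔ).2]
  exact hasSum_le (fun k => (le_abs_self _).trans (abs_pow_apply_le hE k i j))
    (Pi.hasSum.1 (Pi.hasSum.1 hE'.hasSum i) j) (Pi.hasSum.1 (Pi.hasSum.1 hΔ.hasSum i) j)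

theorem isUnit_and_inv_apply_le_of_abs_sub_one_le (hΔ : Summable fun k : ℕ => Δ ^ k)
    {A : Matrix ι ι ℝ} (hA : ∀ i j, |A i j - (1 : Matrix ι ι ℝ) i j| ≤ Δ i j) :
    IsUnit A ∧ ∀ i j, A⁻¹ i j ≤ (1 - Δ)⁻¹ i j := by
  have hE : ∀ i j, |(1 - A) i j| ≤ Δ i j := fun i j => by
    simpa [Matrix.sub_apply, abs_sub_comm] using hA i j
  rw [← sub_sub_cancel 1 A]
  exact ⟨(inv_one_sub_eq_tsum_pow (summable_pow_of_abs_le hΔ hE)).1, inv_one_sub_apply_le hΔ hE⟩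

end Domination

theorem stmt_1_general {n : ℕ} (Δ : Matrix (Fin n) (Fin n) ℝ)
    (hΔ : ∀ i j, 0 ≤ Δ i j)
    (hρ : specRad Δ < 1) :
    IsUnit ((1 : Matrix (Fin n) (Fin n) ℝ) - Δ) ∧
    (∀ A : Matrix (Fin n) (Fin n) ℝ,
      (∀ i j, |A i j - (1 : Matrix (Fin n) (Fin n) ℝ) i j| ≤ Δ i j) →
      IsUnit A ∧ ∀ i j, A⁻¹ i j ≤ ((1 : Matrix (Fin n) (Fin n) ℝ) - Δ)⁻¹ i j) ∧
    (∀ i j, IsGreatest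
      {v : ℝ | ∃ A : Matrix (Fin n) (Fin n) ℝ,
        (∀ i' j', |A i' j' - (1 : Matrix (Fin n) (Fin n) ℝ) i' j'| ≤ Δ i' j') ∧
        v = A⁻¹ i j}
      (((1 : Matrix (Fin n) (Fin n) ℝ) - Δ)⁻¹ i j)) := by
  have hsum := summable_pow_of_specRad_lt_one hρ
  have hIΔ : ∀ i j, |(1 - Δ) i j - (1 : Matrix (Fin n) (Fin n) ℝ) i j| ≤ Δ i j := fun i j => by
    simp [Matrix.sub_apply, abs_of_nonneg (hΔ i j)]
  refine ⟨(inv_one_sub_eq_tsum_pow hsum).1,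
    fun A hA => isUnit_and_inv_apply_le_of_abs_sub_one_le hsum hA,
    fun i j => ⟨⟨1 - Δ, hIΔ, rfl⟩, ?_⟩⟩
  rintro v ⟨A, hA, rfl⟩
  exact (isUnit_and_inv_apply_le_of_abs_sub_one_le hsum hA).2 i j

/-- Upper-bound part of Rohn's theorem: if `Δ ≥ 0` entrywise and `ρ(Δ) < 1`,
then `I - Δ` is invertible, every `A` with `|A - I| ≤ Δ` is invertible with
`A⁻¹ ≤ (I - Δ)⁻¹` entrywise, and for every entry the maximum of `A⁻¹` over
the interval matrix `[I - Δ, I + Δ]` equals `((I - Δ)⁻¹)_{ij}` (attained at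
`A = I - Δ`). -/
theorem stmt_1 {n : ℕ} (hn : 1 ≤ n) (Δ : Matrix (Fin n) (Fin n) ℝ)
    (hΔ : ∀ i j, 0 ≤ Δ i j)
    (hρ : specRad Δ < 1) :
    IsUnit ((1 : Matrix (Fin n) (Fin n) ℝ) - Δ) ∧
    (∀ A : Matrix (Fin n) (Fin n) ℝ,
      (∀ i j, |A i j - (1 : Matrix (Fin n) (Fin n) ℝ) i j| ≤ Δ i j) →
      IsUnit A ∧ ∀ i j, A⁻¹ i j ≤ ((1 : Matrix (Fin n) (Fin n) ℝ) - Δ)⁻¹ i j) ∧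
    (∀ i j, IsGreatest
      {v : ℝ | ∃ A : Matrix (Fin n) (Fin n) ℝ,
        (∀ i' j', |A i' j' - (1 : Matrix (Fin n) (Fin n) ℝ) i' j'| ≤ Δ i' j') ∧
        v = A⁻¹ i j}
      (((1 : Matrix (Fin n) (Fin n) ℝ) - Δ)⁻¹ i j)) :=
  stmt_1_general Δ hΔ hρ
end

section
/- Let n ≥ 1 and Δ ∈ ℝ^{n×n} be entrywise nonnegative with spectral radius ρ(Δ) < 1, and write H̄ = (I − Δ)^{-1}. Then H̄_{jj} ≥ 1 for every j (so 2H̄_{jj} − 1 > 0), and for all i, j the minimum of (A^{-1})_{ij} over all real matrices A with |A − I| ≤ Δ entrywise equals −H̄_{ij} if i ≠ j, and equals H̄_{jj}/(2H̄_{jj} − 1) if i = j. (Lower-bound part of Rohn's theorem on the inverse interval matrix of [I − Δ, I + Δ].) -/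
open Matrix

/-!
By Gelfand's formula `ρ(Δ) < 1` forces `Δ ^ m → 0`, so `H = (1 - Δ)⁻¹` exists and is the limit
of the nonnegative Neumann sums `∑_{k<m} Δ ^ k`; hence `H ≥ 0`, and `H = 1 + Δ H` gives
`H_jj ≥ 1`. If `|A - 1| ≤ Δ` and `A x = e_j`, then `|x| ≤ e_j + Δ |x|`, i.e.
`b := (1 - Δ) |x| ≤ e_j`, and monotonicity of `H` gives `|x| = H b ≤ H e_j`: this is the bound
`-H_ij ≤ (A⁻¹)_ij` (and the invertibility of `A`, with `e_j` replaced by `0`). On the diagonal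
one combines `|x_j| ≤ H_jj b_j` with `x_j ≥ 1 - (Δ |x|)_j = 1 - |x_j| + b_j`. Both bounds are
attained by sign flips of `Δ`: `A = 1 - S Δ S` with `S` changing the sign of the `i`-th
coordinate, and `A = 1 - Δ D` with `D` changing the sign of the `j`-th coordinate.
-/

open Filter Topology

theorem spectrum.tendsto_pow_nhds_zero_of_spectralRadius_lt_one {A : Type*} [NormedRing A]
    [NormedAlgebra ℂ A] [CompleteSpace A] {a : A} (ha : spectralRadius ℂ a < 1) :
    Tendsto (a ^ ·) atTop (𝓝 0) := by
  obtain ⟨r, har, hr1⟩ := ENNReal.lt_iff_exists_nnreal_btwn.mp ha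
  have hpow : ∀ᶠ m : ℕ in atTop, ‖a ^ m‖₊ ≤ r ^ m := by
    filter_upwards [(pow_nnnorm_pow_one_div_tendsto_nhds_spectralRadius a).eventually_lt_const har,
      eventually_ge_atTop 1] with m hm hm1
    have hm0 : (m : ℝ) ≠ 0 := by positivity
    have h := ENNReal.rpow_le_rpow hm.le (by positivity : (0 : ℝ) ≤ m)
    rwa [← ENNReal.rpow_mul, one_div, inv_mul_cancel₀ hm0, ENNReal.rpow_one,
      ENNReal.rpow_natCast, ← ENNReal.coe_pow, ENNReal.coe_le_coe] at h
  refine squeeze_zero_norm' (hpow.mono fun m hm => ?_)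
    (tendsto_pow_atTop_nhds_zero_of_lt_one r.coe_nonneg (by exact_mod_cast hr1))
  exact_mod_cast hm

theorem div_two_mul_sub_one_le {β x b : ℝ} (hβ : 0 ≤ β) (hb : |x| ≤ β * b)
    (hx : 1 - |x| + b ≤ x) : β / (2 * β - 1) ≤ x := by
  rcases lt_or_ge x 0 with hneg | hnonneg
  · rw [abs_of_neg hneg] at hb hx
    nlinarith
  rw [abs_of_nonneg hnonneg] at hb hx
  rcases le_or_gt (2 * β - 1) 0 with hden | hden
  · exact (div_nonpos_of_nonneg_of_nonpos hβ hden).trans hnonneg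
  rw [div_le_iff₀ hden]
  nlinarith [mul_le_mul_of_nonneg_left hx hβ]

namespace Matrix

variable {ι : Type*}

theorem abs_update_one_neg_one [DecidableEq ι] (i k : ι) :
    |Function.update (1 : ι → ℝ) i (-1) k| = 1 := by
  rcases eq_or_ne k i with rfl | hk <;> simp [*]

variable [Fintype ι]

theorem diagonal_update_one_neg_one_mul_self [DecidableEq ι] (i : ι) :
    diagonal (Function.update (1 : ι → ℝ) i (-1)) * diagonal (Function.update 1 i (-1)) = 1 := by
  rw [diagonal_mul_diagonal, ← diagonal_one]
  congr 1
  funext k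
  rcases eq_or_ne k i with rfl | hk <;> simp [*]

theorem mulVec_col_nonsing_inv [DecidableEq ι] {R : Type*} [CommRing R] {A : Matrix ι ι R}
    (hA : IsUnit A.det) (j : ι) : A *ᵥ A⁻¹.col j = Pi.single j 1 := by
  rw [← mulVec_single_one, mulVec_mulVec, mul_nonsing_inv _ hA, one_mulVec]

theorem inv_apply_eq_of_mulVec_eq_single [DecidableEq ι] {R : Type*} [CommRing R]
    {A : Matrix ι ι R} (hA : IsUnit A.det) {x : ι → R} {j : ι} (hx : A *ᵥ x = Pi.single j 1)
    (i : ι) : A⁻¹ i j = x i := by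
  rw [← col_apply A⁻¹ j i, ← mulVec_single_one, ← hx, mulVec_mulVec, nonsing_inv_mul _ hA,
    one_mulVec]

theorem tendsto_pow_nhds_zero_of_spectralRadius_map_lt_one [DecidableEq ι] {Δ : Matrix ι ι ℝ}
    (hρ : spectralRadius ℂ (Δ.map (algebraMap ℝ ℂ)) < 1) :
    Tendsto (Δ ^ ·) atTop (𝓝 0) := by
  let _ := Matrix.linftyOpNormedRing (n := ι) (α := ℂ)
  let _ := Matrix.linftyOpNormedAlgebra (n := ι) (R := ℂ) (α := ℂ)
  have : CompleteSpace (Matrix ι ι ℂ) := FiniteDimensional.complete ℂ _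
  have h := ((continuous_id.matrix_map Complex.continuous_re).tendsto 0).comp
    (spectrum.tendsto_pow_nhds_zero_of_spectralRadius_lt_one hρ)
  convert h using 1
  · ext m : 1
    rw [Function.comp_apply, id, ← Matrix.map_pow, Matrix.map_map]
    exact (map_id' _).symm
  · simp

theorem isUnit_det_one_sub_of_tendsto_pow [DecidableEq ι] {R : Type*} [Field R]
    [TopologicalSpace R] [IsTopologicalRing R] [T2Space R] {Δ : Matrix ι ι R}
    (h : Tendsto (Δ ^ ·) atTop (𝓝 0)) : IsUnit (1 - Δ).det := by
  rw [isUnit_iff_ne_zero, Ne, ← exists_mulVec_eq_zero_iff]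
  rintro ⟨v, hv0, hv⟩
  have hfix : Δ *ᵥ v = v := by
    rw [sub_mulVec, one_mulVec, sub_eq_zero] at hv
    exact hv.symm
  have hpow_fix : ∀ m : ℕ, Δ ^ m *ᵥ v = v := by
    intro m
    induction m with
    | zero => simp
    | succ m ih => rw [pow_succ, ← mulVec_mulVec, hfix, ih]
  have hlim := ((continuous_id.matrix_mulVec (continuous_const (y := v))).tendsto 0).comp h
  simp only [Function.comp_def, id, hpow_fix, zero_mulVec] at hlim
  exact hv0 (tendsto_const_nhds_iff.mp hlim)

theorem inv_one_sub_apply_nonneg [DecidableEq ι] {Δ : Matrix ι ι ℝ} (hΔ : ∀ i j, 0 ≤ Δ i j)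
    (h : Tendsto (Δ ^ ·) atTop (𝓝 0)) (i j : ι) : 0 ≤ (1 - Δ)⁻¹ i j := by
  have hdet := isUnit_det_one_sub_of_tendsto_pow h
  have hsum : ∀ m, ∑ k ∈ Finset.range m, Δ ^ k = (1 - Δ ^ m) * (1 - Δ)⁻¹ := fun m => by
    rw [← geom_sum_mul_neg, Matrix.mul_assoc, mul_nonsing_inv _ hdet, Matrix.mul_one]
  have hlim : Tendsto (fun m => ((1 - Δ ^ m : Matrix ι ι ℝ) * (1 - Δ)⁻¹) i j) atTop
      (𝓝 (((1 - 0 : Matrix ι ι ℝ) * (1 - Δ)⁻¹) i j)) :=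
    ((continuous_apply_apply i j).tendsto _).comp ((tendsto_const_nhds.sub h).mul_const _)
  rw [sub_zero, Matrix.one_mul] at hlim
  refine ge_of_tendsto' hlim fun m => ?_
  rw [← hsum, sum_apply]
  exact Finset.sum_nonneg fun k _ => pow_apply_nonneg hΔ k i j

theorem mulVec_mono_of_nonneg {M : Matrix ι ι ℝ} (hM : ∀ i j, 0 ≤ M i j) {u v : ι → ℝ}
    (h : u ≤ v) : M *ᵥ u ≤ M *ᵥ v :=
  fun i => Finset.sum_le_sum fun k _ => mul_le_mul_of_nonneg_left (h k) (hM i k)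

theorem le_inv_mulVec_of_mulVec_le [DecidableEq ι] {B : Matrix ι ι ℝ} (hB : IsUnit B.det)
    (hBinv : ∀ i j, 0 ≤ B⁻¹ i j) {u b : ι → ℝ} (h : B *ᵥ u ≤ b) : u ≤ B⁻¹ *ᵥ b := by
  simpa [mulVec_mulVec, nonsing_inv_mul _ hB] using mulVec_mono_of_nonneg hBinv h

theorem one_le_inv_one_sub_apply_self [DecidableEq ι] {Δ : Matrix ι ι ℝ}
    (hΔ : ∀ i j, 0 ≤ Δ i j) (hdet : IsUnit (1 - Δ).det) (hH : ∀ i j, 0 ≤ (1 - Δ)⁻¹ i j)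
    (j : ι) : 1 ≤ (1 - Δ)⁻¹ j j := by
  have hH_eq : (1 - Δ)⁻¹ = 1 + Δ * (1 - Δ)⁻¹ := by
    have h := mul_nonsing_inv _ hdet
    rwa [Matrix.sub_mul, Matrix.one_mul, sub_eq_iff_eq_add] at h
  have hΔH : 0 ≤ (Δ * (1 - Δ)⁻¹) j j :=
    Finset.sum_nonneg fun k _ => mul_nonneg (hΔ j k) (hH k j)
  rw [hH_eq, add_apply, one_apply_eq]
  linarith

/-- `A` lies in the interval matrix `[1 - Δ, 1 + Δ]`. -/
def MemInterval [DecidableEq ι] (Δ A : Matrix ι ι ℝ) : Prop :=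
  ∀ i j, |A i j - (1 : Matrix ι ι ℝ) i j| ≤ Δ i j

section MemInterval

variable [DecidableEq ι] {Δ A : Matrix ι ι ℝ}

theorem abs_sub_mulVec_le_of_memInterval (hA : MemInterval Δ A) (x : ι → ℝ) (i : ι) :
    |x i - (A *ᵥ x) i| ≤ (Δ *ᵥ |x|) i := by
  have h : x i - (A *ᵥ x) i = ((1 - A) *ᵥ x) i := by
    rw [sub_mulVec, one_mulVec, Pi.sub_apply]
  rw [h]
  calc |∑ k, (1 - A) i k * x k| ≤ ∑ k, |(1 - A) i k * x k| := Finset.abs_sum_le_sum_abs _ _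
    _ ≤ ∑ k, Δ i k * |x k| := Finset.sum_le_sum fun k _ => by
        rw [abs_mul, sub_apply, abs_sub_comm]
        exact mul_le_mul_of_nonneg_right (hA i k) (abs_nonneg _)

theorem one_sub_mulVec_abs_le_of_memInterval (hA : MemInterval Δ A) (x : ι → ℝ) :
    (1 - Δ) *ᵥ |x| ≤ |A *ᵥ x| := fun i => by
  rw [sub_mulVec, one_mulVec, Pi.sub_apply, Pi.abs_apply, Pi.abs_apply]
  linarith [abs_sub_mulVec_le_of_memInterval hA x i, abs_sub_abs_le_abs_sub (x i) ((A *ᵥ x) i)]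

theorem one_sub_mulVec_abs_le_single_of_memInterval (hA : MemInterval Δ A) {x : ι → ℝ} {j : ι}
    (hx : A *ᵥ x = Pi.single j 1) : (1 - Δ) *ᵥ |x| ≤ Pi.single j 1 := by
  have hsingle : (0 : ι → ℝ) ≤ Pi.single j 1 := Pi.single_nonneg.2 zero_le_one
  simpa [hx, abs_of_nonneg hsingle] using one_sub_mulVec_abs_le_of_memInterval hA x

theorem isUnit_det_of_memInterval (hdet : IsUnit (1 - Δ).det) (hH : ∀ i j, 0 ≤ (1 - Δ)⁻¹ i j)
    (hA : MemInterval Δ A) : IsUnit A.det := by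
  rw [isUnit_iff_ne_zero, Ne, ← exists_mulVec_eq_zero_iff]
  rintro ⟨v, hv0, hv⟩
  have h := le_inv_mulVec_of_mulVec_le hdet hH (one_sub_mulVec_abs_le_of_memInterval hA v)
  rw [hv, abs_zero, mulVec_zero] at h
  exact hv0 (funext fun k => abs_nonpos_iff.mp (h k))

theorem abs_le_inv_one_sub_apply_of_mulVec_eq_single (hdet : IsUnit (1 - Δ).det)
    (hH : ∀ i j, 0 ≤ (1 - Δ)⁻¹ i j) (hA : MemInterval Δ A) {x : ι → ℝ} {j : ι}
    (hx : A *ᵥ x = Pi.single j 1) (i : ι) : |x i| ≤ (1 - Δ)⁻¹ i j := by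
  have h := le_inv_mulVec_of_mulVec_le hdet hH (one_sub_mulVec_abs_le_single_of_memInterval hA hx)
  rw [mulVec_single_one] at h
  exact h i

theorem inv_one_sub_apply_self_div_le_of_mulVec_eq_single (hdet : IsUnit (1 - Δ).det)
    (hH : ∀ i j, 0 ≤ (1 - Δ)⁻¹ i j) (hA : MemInterval Δ A) {x : ι → ℝ} {j : ι}
    (hx : A *ᵥ x = Pi.single j 1) : (1 - Δ)⁻¹ j j / (2 * (1 - Δ)⁻¹ j j - 1) ≤ x j := by
  set b := (1 - Δ) *ᵥ |x| with hb_def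
  have hb : b ≤ Pi.single j 1 := one_sub_mulVec_abs_le_single_of_memInterval hA hx
  have hb_single : b ≤ Pi.single j (b j) := fun k => by
    rcases eq_or_ne k j with rfl | hk
    · simp
    · simpa [hk] using hb k
  have hxj : |x j| ≤ (1 - Δ)⁻¹ j j * b j := by
    rw [← Pi.abs_apply, show |x| = (1 - Δ)⁻¹ *ᵥ b by
      rw [hb_def, mulVec_mulVec, nonsing_inv_mul _ hdet, one_mulVec]]
    simpa using mulVec_mono_of_nonneg hH hb_single j
  have hlow : 1 - |x j| + b j ≤ x j := by
    have h := abs_sub_mulVec_le_of_memInterval hA x j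
    rw [hx, Pi.single_eq_same] at h
    have hbj : b j = |x j| - (Δ *ᵥ |x|) j := by
      rw [hb_def, sub_mulVec, one_mulVec, Pi.sub_apply, Pi.abs_apply]
    linarith [neg_abs_le (x j - 1)]
  exact div_two_mul_sub_one_le (hH j j) hxj hlow

theorem neg_inv_one_sub_apply_le_inv_apply (hdet : IsUnit (1 - Δ).det)
    (hH : ∀ i j, 0 ≤ (1 - Δ)⁻¹ i j) (hA : MemInterval Δ A) (i j : ι) :
    -(1 - Δ)⁻¹ i j ≤ A⁻¹ i j := by
  have hx := mulVec_col_nonsing_inv (isUnit_det_of_memInterval hdet hH hA) j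
  exact (neg_le_neg (abs_le_inv_one_sub_apply_of_mulVec_eq_single hdet hH hA hx i)).trans
    (neg_abs_le _)

theorem inv_one_sub_apply_self_div_le_inv_apply_self (hdet : IsUnit (1 - Δ).det)
    (hH : ∀ i j, 0 ≤ (1 - Δ)⁻¹ i j) (hA : MemInterval Δ A) (j : ι) :
    (1 - Δ)⁻¹ j j / (2 * (1 - Δ)⁻¹ j j - 1) ≤ A⁻¹ j j :=
  inv_one_sub_apply_self_div_le_of_mulVec_eq_single (x := A⁻¹.col j) hdet hH hA
    (mulVec_col_nonsing_inv (isUnit_det_of_memInterval hdet hH hA) j)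

theorem memInterval_one_sub_diagonal_mul_mul_diagonal (hΔ : ∀ i j, 0 ≤ Δ i j) {s t : ι → ℝ}
    (hs : ∀ k, |s k| = 1) (ht : ∀ k, |t k| = 1) :
    MemInterval Δ (1 - diagonal s * Δ * diagonal t) := fun i k => by
  simp [diagonal_mul, mul_diagonal, abs_mul, hs, ht, abs_of_nonneg (hΔ i k)]

theorem exists_memInterval_inv_apply_eq_neg (hΔ : ∀ i j, 0 ≤ Δ i j)
    (hdet : IsUnit (1 - Δ).det) {i j : ι} (hij : i ≠ j) :
    ∃ A, MemInterval Δ A ∧ A⁻¹ i j = -(1 - Δ)⁻¹ i j := by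
  set S := diagonal (Function.update (1 : ι → ℝ) i (-1)) with hS
  have hSS : S * S = 1 := diagonal_update_one_neg_one_mul_self i
  refine ⟨1 - S * Δ * S, memInterval_one_sub_diagonal_mul_mul_diagonal hΔ
    (abs_update_one_neg_one i) (abs_update_one_neg_one i), ?_⟩
  have hA : 1 - S * Δ * S = S * (1 - Δ) * S := by
    rw [Matrix.mul_sub, Matrix.sub_mul, Matrix.mul_one, hSS]
  have hinv : S * (1 - Δ) * S * (S * (1 - Δ)⁻¹ * S) = 1 := by
    calc _ = S * ((1 - Δ) * (S * S) * (1 - Δ)⁻¹) * S := by simp only [Matrix.mul_assoc]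
      _ = 1 := by rw [hSS, Matrix.mul_one, mul_nonsing_inv _ hdet, Matrix.mul_one, hSS]
  rw [hA, inv_eq_right_inv hinv]
  simp [hS, diagonal_mul, mul_diagonal, hij.symm]

theorem exists_memInterval_inv_apply_self_eq (hΔ : ∀ i j, 0 ≤ Δ i j)
    (hdet : IsUnit (1 - Δ).det) (hH : ∀ i j, 0 ≤ (1 - Δ)⁻¹ i j) (j : ι) :
    ∃ A, MemInterval Δ A ∧ A⁻¹ j j = (1 - Δ)⁻¹ j j / (2 * (1 - Δ)⁻¹ j j - 1) := by
  set d : ι → ℝ := Function.update 1 j (-1) with hd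
  set β := (1 - Δ)⁻¹ j j with hβ
  have hβ1 : 1 ≤ β := one_le_inv_one_sub_apply_self hΔ hdet hH j
  set h := (1 - Δ)⁻¹.col j with hh
  set A := 1 - Δ * diagonal d with hA_def
  have hA : MemInterval Δ A := by
    have hsign := memInterval_one_sub_diagonal_mul_mul_diagonal hΔ (s := 1) (t := d)
      (fun _ => abs_one) (abs_update_one_neg_one j)
    rwa [show diagonal (1 : ι → ℝ) = 1 from diagonal_one, Matrix.one_mul] at hsign
  have hΔh : Δ *ᵥ h = h - Pi.single j 1 := by
    have h1 := mulVec_col_nonsing_inv hdet j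
    rw [sub_mulVec, one_mulVec] at h1
    rw [← h1, sub_sub_cancel]
  have hAD : A * diagonal d = diagonal d - Δ := by
    rw [hA_def, Matrix.sub_mul, Matrix.one_mul, Matrix.mul_assoc,
      diagonal_update_one_neg_one_mul_self, Matrix.mul_one]
  -- `A D h = (D - Δ) h = D h - h + e_j = (1 - 2β) e_j`, since `D` only flips the `j`-th entry
  have hx : A *ᵥ ((1 - 2 * β)⁻¹ • (diagonal d *ᵥ h)) = Pi.single j 1 := by
    rw [mulVec_smul, mulVec_mulVec, hAD, sub_mulVec, hΔh]
    funext k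
    rcases eq_or_ne k j with rfl | hk
    · simp only [Pi.smul_apply, Pi.sub_apply, mulVec_diagonal, hd, hh, col_apply, ← hβ,
        Function.update_self, Pi.single_eq_same, smul_eq_mul]
      rw [show -1 * β - (β - 1) = 1 - 2 * β by ring]
      exact inv_mul_cancel₀ (by linarith)
    · simp [mulVec_diagonal, hd, hk]
  refine ⟨A, hA, ?_⟩
  rw [inv_apply_eq_of_mulVec_eq_single (isUnit_det_of_memInterval hdet hH hA) hx]
  simp only [Pi.smul_apply, mulVec_diagonal, hd, hh, col_apply, ← hβ, Function.update_self,
    smul_eq_mul]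
  rw [div_eq_mul_inv, ← neg_sub, inv_neg]
  ring

end MemInterval

end Matrix

theorem stmt_2_general {n : ℕ} (Δ : Matrix (Fin n) (Fin n) ℝ)
    (hΔ : ∀ i j, 0 ≤ Δ i j)
    (hρ : specRad Δ < 1)
    (Hbar : Matrix (Fin n) (Fin n) ℝ)
    (hHbar : Hbar = ((1 : Matrix (Fin n) (Fin n) ℝ) - Δ)⁻¹) :
    (∀ j, 1 ≤ Hbar j j) ∧
    (∀ j, 0 < 2 * Hbar j j - 1) ∧
    (∀ i j, i ≠ j → IsLeast
      {v : ℝ | ∃ A : Matrix (Fin n) (Fin n) ℝ,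
        (∀ i' j', |A i' j' - (1 : Matrix (Fin n) (Fin n) ℝ) i' j'| ≤ Δ i' j') ∧
        v = A⁻¹ i j}
      (-Hbar i j)) ∧
    (∀ j, IsLeast
      {v : ℝ | ∃ A : Matrix (Fin n) (Fin n) ℝ,
        (∀ i' j', |A i' j' - (1 : Matrix (Fin n) (Fin n) ℝ) i' j'| ≤ Δ i' j') ∧
        v = A⁻¹ j j}
      (Hbar j j / (2 * Hbar j j - 1))) := by
  subst hHbar
  have hpow := tendsto_pow_nhds_zero_of_spectralRadius_map_lt_one hρ
  have hdet := isUnit_det_one_sub_of_tendsto_pow hpow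
  have hH := inv_one_sub_apply_nonneg hΔ hpow
  have hdiag := one_le_inv_one_sub_apply_self hΔ hdet hH
  refine ⟨hdiag, fun j => by linarith [hdiag j], fun i j hij => ⟨?_, ?_⟩, fun j => ⟨?_, ?_⟩⟩
  · obtain ⟨A, hA, hAij⟩ := exists_memInterval_inv_apply_eq_neg hΔ hdet hij
    exact ⟨A, hA, hAij.symm⟩
  · rintro _ ⟨A, hA, rfl⟩
    exact neg_inv_one_sub_apply_le_inv_apply hdet hH hA i j
  · obtain ⟨A, hA, hAjj⟩ := exists_memInterval_inv_apply_self_eq hΔ hdet hH j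
    exact ⟨A, hA, hAjj.symm⟩
  · rintro _ ⟨A, hA, rfl⟩
    exact inv_one_sub_apply_self_div_le_inv_apply_self hdet hH hA j

/-- Lower-bound part of Rohn's theorem: with `H̄ = (I - Δ)⁻¹`, one has
`H̄_{jj} ≥ 1` (so `2H̄_{jj} - 1 > 0`) and, over all `A` with `|A - I| ≤ Δ`
entrywise, the minimum of `(A⁻¹)_{ij}` equals `-H̄_{ij}` for `i ≠ j` and
`H̄_{jj}/(2H̄_{jj} - 1)` for `i = j`. -/
theorem stmt_2 {n : ℕ} (hn : 1 ≤ n) (Δ : Matrix (Fin n) (Fin n) ℝ)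
    (hΔ : ∀ i j, 0 ≤ Δ i j)
    (hρ : specRad Δ < 1)
    (Hbar : Matrix (Fin n) (Fin n) ℝ)
    (hHbar : Hbar = ((1 : Matrix (Fin n) (Fin n) ℝ) - Δ)⁻¹) :
    (∀ j, 1 ≤ Hbar j j) ∧
    (∀ j, 0 < 2 * Hbar j j - 1) ∧
    (∀ i j, i ≠ j → IsLeast
      {v : ℝ | ∃ A : Matrix (Fin n) (Fin n) ℝ,
        (∀ i' j', |A i' j' - (1 : Matrix (Fin n) (Fin n) ℝ) i' j'| ≤ Δ i' j') ∧
        v = A⁻¹ i j}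
      (-Hbar i j)) ∧
    (∀ j, IsLeast
      {v : ℝ | ∃ A : Matrix (Fin n) (Fin n) ℝ,
        (∀ i' j', |A i' j' - (1 : Matrix (Fin n) (Fin n) ℝ) i' j'| ≤ Δ i' j') ∧
        v = A⁻¹ j j}
      (Hbar j j / (2 * Hbar j j - 1))) :=
  stmt_2_general Δ hΔ hρ Hbar hHbar
end

section
/- Assume A(p̌) is nonsingular, let C = A(p̌)^{-1}, set Δ = Σ_{k=1}^K |C A_k| p̂_k, and assume ρ(Δ) < 1. Then A(p) is invertible for every p in the parameter box 𝐩. (Part (i) of Kolev's theorem on the p,l-solution.) -/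
open Matrix

section Aux

attribute [local instance] Matrix.linftyOpNormedRing Matrix.linftyOpNormedAlgebra
  Matrix.linftyOpNormedAddCommGroup

/-- Entrywise power bound. -/
lemma kolev_abs_pow_le {n : ℕ} {E D : Matrix (Fin n) (Fin n) ℝ}
    (h : ∀ i j, |E i j| ≤ D i j) (m : ℕ) : ∀ i j, |(E ^ m) i j| ≤ (D ^ m) i j := by
  induction m with
  | zero =>
    intro i j
    simp only [pow_zero, Matrix.one_apply]
    split_ifs <;> simp
  | succ m ih =>
    intro i j
    rw [pow_succ, pow_succ, Matrix.mul_apply, Matrix.mul_apply]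
    refine (Finset.abs_sum_le_sum_abs _ _).trans (Finset.sum_le_sum fun k _ => ?_)
    rw [abs_mul]
    exact mul_le_mul (ih i k) (h k j) (abs_nonneg _) ((abs_nonneg _).trans (ih i k))

lemma kolev_nnnorm_map {n : ℕ} (M : Matrix (Fin n) (Fin n) ℝ) :
    ‖M.map (algebraMap ℝ ℂ)‖₊ = ‖M‖₊ := by
  rw [Matrix.linfty_opNNNorm_def, Matrix.linfty_opNNNorm_def]
  congr 1
  ext i
  simp [Matrix.map_apply]

lemma kolev_nnnorm_mono {n : ℕ} {E D : Matrix (Fin n) (Fin n) ℝ}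
    (h : ∀ i j, |E i j| ≤ D i j) : ‖E‖₊ ≤ ‖D‖₊ := by
  rw [Matrix.linfty_opNNNorm_def, Matrix.linfty_opNNNorm_def]
  refine Finset.sup_mono_fun fun i _ => Finset.sum_le_sum fun j _ => ?_
  have h0 : 0 ≤ D i j := (abs_nonneg _).trans (h i j)
  rw [← NNReal.coe_le_coe]
  simpa [Real.norm_eq_abs, abs_of_nonneg h0] using h i j

/-- If the spectral radius of `Δ` is less than 1 and `|E| ≤ Δ` entrywise,
then `1 + E` is a unit. -/
lemma kolev_isUnit_one_add {n : ℕ} {E Δ : Matrix (Fin n) (Fin n) ℝ}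
    (h : ∀ i j, |E i j| ≤ Δ i j) (hρ : specRad Δ < 1) :
    IsUnit (1 + E) := by
  rcases Nat.eq_zero_or_pos n with hn | hn
  · subst hn; exact isUnit_of_subsingleton _
  haveI : Nonempty (Fin n) := ⟨⟨0, hn⟩⟩
  haveI : CompleteSpace (Matrix (Fin n) (Fin n) ℂ) := FiniteDimensional.complete ℂ _
  set f := algebraMap ℝ ℂ
  have hmap_pow : ∀ (M : Matrix (Fin n) (Fin n) ℝ) (m : ℕ),
      (M.map f) ^ m = (M ^ m).map f := by
    intro M m
    rw [← RingHom.mapMatrix_apply, ← map_pow, RingHom.mapMatrix_apply]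
  -- Gelfand: find m ≥ 1 with ‖Δ'^m‖₊ ^ (1/m) < 1
  have hten := spectrum.pow_nnnorm_pow_one_div_tendsto_nhds_spectralRadius (Δ.map f)
  obtain ⟨m, hm1, hm2⟩ :=
    ((hten.eventually_lt_const hρ).and (Filter.eventually_ge_atTop 1)).exists
  obtain ⟨j, rfl⟩ : ∃ j, m = j + 1 := ⟨m - 1, (Nat.succ_pred_eq_of_pos hm2).symm⟩
  -- spectral radius of E' is < 1
  have hEm : (‖(E.map f) ^ (j + 1)‖₊ : ENNReal) ≤ ‖(Δ.map f) ^ (j + 1)‖₊ := by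
    rw [hmap_pow, hmap_pow, kolev_nnnorm_map, kolev_nnnorm_map]
    exact_mod_cast kolev_nnnorm_mono (kolev_abs_pow_le h (j + 1))
  have hρE : spectralRadius ℂ (E.map f) < 1 := by
    calc spectralRadius ℂ (E.map f)
        ≤ (‖(E.map f) ^ (j + 1)‖₊ : ENNReal) ^ (1 / (j + 1) : ℝ) *
          (‖(1 : Matrix (Fin n) (Fin n) ℂ)‖₊ : ENNReal) ^ (1 / (j + 1) : ℝ) :=
          spectrum.spectralRadius_le_pow_nnnorm_pow_one_div ℂ _ j
      _ = (‖(E.map f) ^ (j + 1)‖₊ : ENNReal) ^ (1 / (j + 1) : ℝ) := by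
          rw [nnnorm_one]; simp
      _ ≤ (‖(Δ.map f) ^ (j + 1)‖₊ : ENNReal) ^ (1 / (j + 1) : ℝ) := by
          exact ENNReal.rpow_le_rpow hEm (by positivity)
      _ < 1 := by
          have := hm1
          push_cast at this ⊢
          exact this
  -- hence -1 is in the resolvent set
  have hres : (-1 : ℂ) ∈ resolventSet ℂ (E.map f) := by
    refine spectrum.mem_resolventSet_of_spectralRadius_lt ?_
    simpa using hρE
  rw [spectrum.mem_resolventSet_iff] at hres
  have : IsUnit ((1 : Matrix (Fin n) (Fin n) ℂ) + E.map f) := by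
    have h2 : algebraMap ℂ (Matrix (Fin n) (Fin n) ℂ) (-1) - E.map f
        = -(1 + E.map f) := by
      rw [map_neg, _root_.map_one]
      abel
    rw [h2] at hres
    exact (IsUnit.neg_iff _).mp hres
  -- transfer back to ℝ via determinants
  have hmap1 : (1 + E).map f = (1 : Matrix (Fin n) (Fin n) ℂ) + E.map f := by
    rw [← RingHom.mapMatrix_apply, map_add, _root_.map_one, RingHom.mapMatrix_apply]
  rw [← hmap1, Matrix.isUnit_iff_isUnit_det, ← RingHom.mapMatrix_apply,
    ← RingHom.map_det] at this
  rw [Matrix.isUnit_iff_isUnit_det]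
  exact isUnit_iff_ne_zero.mpr fun h0 => by simp [h0] at this
end Aux

/-- Part (i) of Kolev's theorem: if `A(p̌)` is nonsingular, `C = A(p̌)⁻¹`,
`Δ = Σ_k |C A_k| p̂_k` and `ρ(Δ) < 1`, then `A(p)` is invertible for every
`p` in the parameter box. -/
theorem stmt_3 {n K : ℕ}
    (A₀ : Matrix (Fin n) (Fin n) ℝ) (A : Fin K → Matrix (Fin n) (Fin n) ℝ)
    (pc ph : Fin K → ℝ) (hph : ∀ k, 0 ≤ ph k)
    (hreg : IsUnit (A₀ + ∑ k, pc k • A k))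
    (C : Matrix (Fin n) (Fin n) ℝ) (hC : C = (A₀ + ∑ k, pc k • A k)⁻¹)
    (Δ : Matrix (Fin n) (Fin n) ℝ)
    (hΔ : Δ = ∑ k, ph k • ((C * A k).map (fun x => |x|)))
    (hρ : specRad Δ < 1) :
    ∀ p : Fin K → ℝ, (∀ k, |p k - pc k| ≤ ph k) →
      IsUnit (A₀ + ∑ k, p k • A k) := by
  intro p hp
  set Ac := A₀ + ∑ k, pc k • A k with hAc
  have hdet : IsUnit Ac.det := (Matrix.isUnit_iff_isUnit_det _).mp hreg
  have hAcC : Ac * C = 1 := by rw [hC]; exact Matrix.mul_nonsing_inv _ hdet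
  set E : Matrix (Fin n) (Fin n) ℝ := ∑ k, (p k - pc k) • (C * A k) with hE
  have hEΔ : ∀ i j, |E i j| ≤ Δ i j := by
    intro i j
    rw [hE, hΔ]
    simp only [Matrix.sum_apply, Matrix.smul_apply, Matrix.map_apply, smul_eq_mul]
    refine (Finset.abs_sum_le_sum_abs _ _).trans (Finset.sum_le_sum fun k _ => ?_)
    rw [abs_mul]
    exact mul_le_mul_of_nonneg_right (hp k) (abs_nonneg _)
  have key : A₀ + ∑ k, p k • A k = Ac * (1 + E) := by
    rw [mul_add, mul_one, hE, Finset.mul_sum]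
    simp_rw [Matrix.mul_smul, ← Matrix.mul_assoc, hAcC, Matrix.one_mul, sub_smul]
    rw [hAc]
    rw [Finset.sum_sub_distrib]
    abel
  rw [key]
  exact hreg.mul (kolev_isUnit_one_add hEΔ hρ)
end
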